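/- The point (x,y) = (1/2 - μ, √3/2) is a critical point of the effective potential U(x,y) = (x²+y²)/2 + (1-μ)/δ₀ + μ/δ₁ of the planar circular restricted three-body problem (with n = 1), i.e., both partial derivatives of U vanish there. -/

import Mathlib

/-!
At a point `p` at distance `1` from both primaries `P₀ = (-μ, 0)` and `P₁ = (1 - μ, 0)`, the
gradient of `U` is `p - (1 - μ) (p - P₀) - μ (p - P₁) = (1 - μ) P₀ + μ P₁`, the centre of mass
of the primaries, which is the origin. The point `(1/2 - μ, √3/2)` is such a point: it is the
apex of the equilateral triangle on the segment `P₀P₁` of length `1`.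
-/

open ContinuousLinearMap

lemma hasFDerivAt_sq_add_sq_div_two (p : ℝ × ℝ) :
    HasFDerivAt (fun q : ℝ × ℝ => (q.1 ^ 2 + q.2 ^ 2) / 2)
      (p.1 • fst ℝ ℝ ℝ + p.2 • snd ℝ ℝ ℝ) p := by
  have h := (((hasFDerivAt_fst (𝕜 := ℝ) (p := p)).pow 2).add
    ((hasFDerivAt_snd (𝕜 := ℝ) (p := p)).pow 2)).mul_const (2⁻¹ : ℝ)
  refine (h.congr_fderiv ?_).congr_of_eventuallyEq (.of_forall fun q => ?_)
  · ext <;> simp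
  · simp [div_eq_mul_inv]

lemma hasFDerivAt_div_sqrt_sq_add_sq (c a b : ℝ) {p : ℝ × ℝ}
    (hp : (p.1 - a) ^ 2 + (p.2 - b) ^ 2 ≠ 0) :
    HasFDerivAt (fun q : ℝ × ℝ => c / √((q.1 - a) ^ 2 + (q.2 - b) ^ 2))
      (-(c / √((p.1 - a) ^ 2 + (p.2 - b) ^ 2) ^ 3) •
        ((p.1 - a) • fst ℝ ℝ ℝ + (p.2 - b) • snd ℝ ℝ ℝ)) p := by
  have hr : 0 < √((p.1 - a) ^ 2 + (p.2 - b) ^ 2) :=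
    Real.sqrt_pos.2 (lt_of_le_of_ne (by positivity) hp.symm)
  have h := ((hasDerivAt_inv hr.ne').const_mul c).comp_hasFDerivAt p
    (((((hasFDerivAt_fst (𝕜 := ℝ) (p := p)).sub_const a).pow 2).add
      (((hasFDerivAt_snd (𝕜 := ℝ) (p := p)).sub_const b).pow 2)).sqrt hp)
  refine (h.congr_fderiv ?_).congr_of_eventuallyEq (.of_forall fun q => ?_)
  · ext <;> simp <;> field_simp
  · simp [div_eq_mul_inv]

noncomputable def effectivePotential (μ : ℝ) (p : ℝ × ℝ) : ℝ :=
  (p.1 ^ 2 + p.2 ^ 2) / 2 + (1 - μ) / √((p.1 + μ) ^ 2 + p.2 ^ 2)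
    + μ / √((p.1 - (1 - μ)) ^ 2 + p.2 ^ 2)

theorem hasFDerivAt_effectivePotential_zero_of_dist_eq_one (μ : ℝ) {p : ℝ × ℝ}
    (h₀ : (p.1 + μ) ^ 2 + p.2 ^ 2 = 1) (h₁ : (p.1 - (1 - μ)) ^ 2 + p.2 ^ 2 = 1) :
    HasFDerivAt (effectivePotential μ) (0 : ℝ × ℝ →L[ℝ] ℝ) p := by
  have h₀' : (p.1 - -μ) ^ 2 + (p.2 - 0) ^ 2 = 1 := by simpa using h₀
  have h₁' : (p.1 - (1 - μ)) ^ 2 + (p.2 - 0) ^ 2 = 1 := by simpa using h₁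
  have h := ((hasFDerivAt_sq_add_sq_div_two p).add
    (hasFDerivAt_div_sqrt_sq_add_sq (1 - μ) (-μ) 0 (by rw [h₀']; exact one_ne_zero))).add
    (hasFDerivAt_div_sqrt_sq_add_sq μ (1 - μ) 0 (by rw [h₁']; exact one_ne_zero))
  rw [h₀', h₁', Real.sqrt_one] at h
  refine (h.congr_fderiv ?_).congr_of_eventuallyEq (.of_forall fun q => ?_)
  · ext <;> simp <;> ring
  · simp [effectivePotential]

theorem L4_critical_point_general (μ : ℝ) :
    fderiv ℝ
      (fun p : ℝ × ℝ =>
        (p.1 ^ 2 + p.2 ^ 2) / 2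
          + (1 - μ) / Real.sqrt ((p.1 + μ) ^ 2 + p.2 ^ 2)
          + μ / Real.sqrt ((p.1 - (1 - μ)) ^ 2 + p.2 ^ 2))
      (1 / 2 - μ, Real.sqrt 3 / 2) = 0 := by
  have h3 : Real.sqrt 3 ^ 2 = 3 := Real.sq_sqrt (by norm_num)
  exact (hasFDerivAt_effectivePotential_zero_of_dist_eq_one μ
    (by linear_combination h3 / 4) (by linear_combination h3 / 4)).fderiv

/-- `L4 = (1/2 - μ, √3/2)` is a critical point of the effective potential
`U(x,y) = (x²+y²)/2 + (1-μ)/δ₀ + μ/δ₁` of the planar CR3BP (with `n = 1`). -/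
theorem L4_critical_point (μ : ℝ) (hμ0 : 0 < μ) (hμ1 : μ < 1) :
    fderiv ℝ
      (fun p : ℝ × ℝ =>
        (p.1 ^ 2 + p.2 ^ 2) / 2
          + (1 - μ) / Real.sqrt ((p.1 + μ) ^ 2 + p.2 ^ 2)
          + μ / Real.sqrt ((p.1 - (1 - μ)) ^ 2 + p.2 ^ 2))
      (1 / 2 - μ, Real.sqrt 3 / 2) = 0 :=
  L4_critical_point_general μ
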